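/- arXiv:1710.10679 — 3 statements merged into one kernel-verified Lean document; each statement's English description precedes it below -/
import Mathlib

section
/- Let Y₁, Y₂, … be independent random variables where Y_n is geometric with parameter 1 - q^n (P[Y_n = k] = (1-q^n) q^{nk} for k ∈ ℕ), q ∈ (0,1). Then S_q = Σ_{n=1}^∞ n Y_n converges almost surely, and its Laplace transform satisfies E[e^{z S_q}] = Π_{n=1}^∞ (1 - q^n)/(1 - q^n e^{nz}) for all complex z with Re(z) < -log q. In particular S_q has the law of the size of a random integer partition chosen with probability proportional to q^{|λ|}. -/
/-!
Since `P[Y_n ≠ 0] = q^(n+1)` is summable, Borel–Cantelli makes `S_q` a finite sum almost surely.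
For a partial sum `S_N`, independence factors `E[e^(z S_N)]` into the Laplace transforms
`(1 - q^n) / (1 - q^n e^(n z))` of the geometric variables. Letting `N → ∞` is dominated
convergence with the dominant `e^(t S_q)`, `t = max (Re z) 0`, which still has `q e^t < 1`; it is
integrable by Fatou's lemma, as `E[e^(t S_N)] ≤ ∏ (1 - (q e^t)^n)⁻¹` is bounded uniformly in `N`.
-/

open MeasureTheory ProbabilityTheory Filter Topology Finset

namespace MeasureTheory

variable {Ω : Type*} {mΩ : MeasurableSpace Ω} {μ : Measure Ω}

theorem ae_summable_of_tsum_measure_setOf_ne_zero_ne_top {M : Type*} [AddCommMonoid M]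
    [TopologicalSpace M] {f : ℕ → Ω → M} (h : ∑' n, μ {ω | f n ω ≠ 0} ≠ ⊤) :
    ∀ᵐ ω ∂μ, Summable (f · ω) := by
  filter_upwards [ae_eventually_notMem h] with ω hω
  rw [← Nat.cofinite_eq_atTop, eventually_cofinite] at hω
  exact summable_of_hasFiniteSupport
    (by simpa [Function.HasFiniteSupport, Function.support] using hω)

theorem integrable_of_tendsto_of_lintegral_enorm_le {E : Type*} [NormedAddCommGroup E]
    {G : ℕ → Ω → E} {f : Ω → E} (hGf : ∀ᵐ ω ∂μ, Tendsto (G · ω) atTop (𝓝 (f ω)))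
    (hG : ∀ n, AEStronglyMeasurable (G n) μ) {C : ENNReal} (hC : C ≠ ⊤)
    (hbound : ∀ n, ∫⁻ ω, ‖G n ω‖ₑ ∂μ ≤ C) : Integrable f μ := by
  refine ⟨aestronglyMeasurable_of_tendsto_ae _ hG hGf, ?_⟩
  calc ∫⁻ ω, ‖f ω‖ₑ ∂μ = ∫⁻ ω, liminf (fun n ↦ ‖G n ω‖ₑ) atTop ∂μ :=
        lintegral_congr_ae (by filter_upwards [hGf] with ω hω using hω.enorm.liminf_eq.symm)
    _ ≤ liminf (fun n ↦ ∫⁻ ω, ‖G n ω‖ₑ ∂μ) atTop :=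
        lintegral_liminf_le' fun n ↦ (hG n).enorm
    _ ≤ C := liminf_le_of_frequently_le' (Frequently.of_forall hbound)
    _ < ⊤ := hC.lt_top

end MeasureTheory

theorem Real.prod_range_inv_one_sub_pow_succ_le {a : ℝ} (ha0 : 0 ≤ a) (ha1 : a < 1) (N : ℕ) :
    ∏ n ∈ range N, (1 - a ^ (n + 1))⁻¹ ≤ Real.exp ((1 - a)⁻¹ ^ 2) := by
  have hterm (n : ℕ) : (1 - a ^ (n + 1))⁻¹ ≤ 1 + a ^ n / (1 - a) := by
    have hdecay : a ^ (n + 1) ≤ a ^ n := pow_le_pow_of_le_one ha0 ha1.le n.le_succ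
    have hle : a ^ (n + 1) ≤ a := pow_le_of_le_one ha0 ha1.le (by omega)
    have hsmall : a ^ n ≤ a ^ n / (1 - a) * (1 - a ^ (n + 1)) := by
      rw [div_mul_eq_mul_div, le_div_iff₀ (sub_pos.2 ha1)]
      exact mul_le_mul_of_nonneg_left (by linarith) (pow_nonneg ha0 n)
    rw [inv_le_iff_one_le_mul₀ (sub_pos.2 (pow_lt_one₀ ha0 ha1 (by omega)))]
    linarith [add_mul 1 (a ^ n / (1 - a)) (1 - a ^ (n + 1))]
  calc ∏ n ∈ range N, (1 - a ^ (n + 1))⁻¹ ≤ ∏ n ∈ range N, (1 + a ^ n / (1 - a)) :=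
        prod_le_prod (fun n _ ↦ inv_nonneg.2 (sub_nonneg.2 (pow_le_one₀ ha0 ha1.le)))
          fun n _ ↦ hterm n
    _ ≤ Real.exp (∑ n ∈ range N, a ^ n / (1 - a)) :=
        Real.prod_one_add_le_exp_sum _ fun n ↦ by have := sub_pos.2 ha1; positivity
    _ ≤ Real.exp ((1 - a)⁻¹ ^ 2) := by
        gcongr
        rw [← sum_div, sq, ← div_eq_mul_inv]
        gcongr
        simpa using geom_sum_Ico_le_of_lt_one (m := 0) (n := N) ha0 ha1

section Geometric

variable {Ω : Type*} {mΩ : MeasurableSpace Ω} {μ : Measure Ω} {X : Ω → ℕ} {p : ℝ}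

theorem measure_setOf_ne_zero_of_geometric [IsProbabilityMeasure μ] (hX : Measurable X)
    (hp1 : p ≤ 1)
    (hlaw : ∀ k, μ {ω | X ω = k} = ENNReal.ofReal ((1 - p) * p ^ k)) :
    μ {ω | X ω ≠ 0} = ENNReal.ofReal p := by
  have hzero : MeasurableSet {ω | X ω = 0} := hX (measurableSet_singleton 0)
  rw [← Set.compl_ofPred, prob_compl_eq_one_sub hzero, hlaw, pow_zero, mul_one,
    ← ENNReal.ofReal_one, ← ENNReal.ofReal_sub _ (sub_nonneg.2 hp1), sub_sub_cancel]

theorem lintegral_enorm_cexp_mul_of_geometric (hX : Measurable X) (hp0 : 0 ≤ p)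
    (hlaw : ∀ k, μ {ω | X ω = k} = ENNReal.ofReal ((1 - p) * p ^ k)) {w : ℂ}
    (hw : p * Real.exp w.re < 1) :
    ∫⁻ ω, ‖Complex.exp (w * X ω)‖ₑ ∂μ = ENNReal.ofReal ((1 - p) / (1 - p * Real.exp w.re)) := by
  have hr0 : 0 ≤ p * Real.exp w.re := by positivity
  have hterm (k : ℕ) : ‖Complex.exp (w * k)‖ₑ * Measure.map X μ {k}
      = ENNReal.ofReal (1 - p) * ENNReal.ofReal ((p * Real.exp w.re) ^ k) := by
    have hnorm : ‖Complex.exp (w * k)‖ₑ = ENNReal.ofReal (Real.exp w.re ^ k) := by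
      rw [← ofReal_norm, Complex.norm_exp, ← Real.exp_nat_mul, mul_comm]
      simp
    rw [Measure.map_apply hX (measurableSet_singleton k), Set.preimage, hnorm]
    simp only [Set.mem_singleton_iff]
    rw [hlaw, ENNReal.ofReal_mul' (pow_nonneg hp0 k), mul_pow,
      ENNReal.ofReal_mul (pow_nonneg hp0 k)]
    ring
  rw [← lintegral_map (f := fun k : ℕ ↦ ‖Complex.exp (w * k)‖ₑ) (measurable_of_countable _) hX,
    lintegral_countable', tsum_congr hterm, ENNReal.tsum_mul_left,
    ← ENNReal.ofReal_tsum_of_nonneg (fun k ↦ by positivity) (summable_geometric_of_lt_one hr0 hw),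
    tsum_geometric_of_lt_one hr0 hw, ← ENNReal.ofReal_mul' (by simpa using hw.le), div_eq_mul_inv]

theorem integral_cexp_mul_of_geometric (hX : Measurable X) (hp0 : 0 ≤ p) (hp1 : p ≤ 1)
    (hlaw : ∀ k, μ {ω | X ω = k} = ENNReal.ofReal ((1 - p) * p ^ k)) {w : ℂ}
    (hw : p * Real.exp w.re < 1) :
    ∫ ω, Complex.exp (w * X ω) ∂μ = (1 - p) / (1 - p * Complex.exp w) := by
  set g : ℕ → ℂ := fun k ↦ Complex.exp (w * k)
  have hg : AEStronglyMeasurable g (Measure.map X μ) :=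
    (measurable_of_countable g).aestronglyMeasurable
  have hint : Integrable g (Measure.map X μ) := by
    refine (integrable_map_measure hg hX.aemeasurable).2 ⟨hg.comp_aemeasurable hX.aemeasurable, ?_⟩
    rw [HasFiniteIntegral, Function.comp_def, lintegral_enorm_cexp_mul_of_geometric hX hp0 hlaw hw]
    exact ENNReal.ofReal_lt_top
  have hnorm : ‖(p : ℂ) * Complex.exp w‖ < 1 := by
    rwa [norm_mul, Complex.norm_exp, Complex.norm_real, Real.norm_of_nonneg hp0]
  have hterm (k : ℕ) : (Measure.map X μ).real {k} • g k = (1 - p) * (p * Complex.exp w) ^ k := by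
    rw [measureReal_def, Measure.map_apply hX (measurableSet_singleton k), Set.preimage]
    simp only [Set.mem_singleton_iff]
    rw [hlaw, ENNReal.toReal_ofReal (mul_nonneg (sub_nonneg.2 hp1) (pow_nonneg hp0 k)),
      Complex.real_smul, mul_pow, ← Complex.exp_nat_mul, mul_comm (k : ℂ)]
    push_cast
    ring
  rw [← integral_map hX.aemeasurable hg, integral_countable hint, tsum_congr hterm, tsum_mul_left,
    tsum_geometric_of_norm_lt_one hnorm, div_eq_mul_inv]

end Geometric

theorem pow_mul_exp_re_natCast_mul (q : ℝ) (z : ℂ) (m : ℕ) :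
    q ^ m * Real.exp ((m : ℂ) * z).re = (q * Real.exp z.re) ^ m := by
  rw [mul_pow, ← Real.exp_nat_mul]
  simp

theorem cexp_mul_sum_range (z : ℂ) (y : ℕ → ℕ) (N : ℕ) :
    Complex.exp (z * ↑(∑ n ∈ range N, ((n + 1 : ℝ) * (y n : ℝ))))
      = ∏ n ∈ range N, Complex.exp (((n + 1 : ℕ) : ℂ) * z * y n) := by
  rw [← Complex.exp_sum]
  push_cast
  rw [mul_sum]
  exact congrArg Complex.exp (sum_congr rfl fun n _ ↦ by ring)

theorem multipliable_one_sub_pow_div_one_sub_pow_mul_cexp {q : ℝ} (hq0 : 0 ≤ q) (hq1 : q < 1)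
    {z : ℂ} (hz : q * Real.exp z.re < 1) :
    Multipliable fun n : ℕ ↦
      (1 - (q : ℂ) ^ (n + 1)) / (1 - (q : ℂ) ^ (n + 1) * Complex.exp (((n + 1 : ℕ) : ℂ) * z)) := by
  set a := q * Real.exp z.re
  have ha0 : 0 ≤ a := by positivity
  have hnorm_q (n : ℕ) : ‖(q : ℂ) ^ (n + 1)‖ = q ^ (n + 1) := by
    rw [norm_pow, Complex.norm_real, Real.norm_of_nonneg hq0]
  have hdist (n : ℕ) : ‖(1 - (q : ℂ) ^ (n + 1)) / (1 - (q : ℂ) ^ (n + 1)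
      * Complex.exp (((n + 1 : ℕ) : ℂ) * z)) - 1‖ ≤ (a ^ (n + 1) + q ^ (n + 1)) / (1 - a) := by
    set u := (q : ℂ) ^ (n + 1) * Complex.exp (((n + 1 : ℕ) : ℂ) * z)
    have hu : ‖u‖ = a ^ (n + 1) := by
      rw [norm_mul, hnorm_q, Complex.norm_exp, pow_mul_exp_re_natCast_mul]
    have hu1 : 1 - a ≤ ‖1 - u‖ := calc
      1 - a ≤ 1 - a ^ (n + 1) := by linarith [pow_le_of_le_one ha0 hz.le (n := n + 1) (by omega)]
      _ = ‖(1 : ℂ)‖ - ‖u‖ := by rw [norm_one, hu]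
      _ ≤ ‖1 - u‖ := norm_sub_norm_le _ _
    have hu0 : 1 - u ≠ 0 := norm_pos_iff.1 (lt_of_lt_of_le (sub_pos.2 hz) hu1)
    rw [div_sub_one hu0, sub_sub_sub_cancel_left, norm_div]
    gcongr
    calc ‖u - (q : ℂ) ^ (n + 1)‖ ≤ ‖u‖ + ‖(q : ℂ) ^ (n + 1)‖ := norm_sub_le _ _
      _ = a ^ (n + 1) + q ^ (n + 1) := by rw [hu, hnorm_q]
  have hsum : Summable fun n : ℕ ↦ (a ^ (n + 1) + q ^ (n + 1)) / (1 - a) := by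
    refine Summable.div_const (Summable.add ?_ ?_) _
    · simpa only [pow_succ'] using (summable_geometric_of_lt_one ha0 hz).mul_left a
    · simpa only [pow_succ'] using (summable_geometric_of_lt_one hq0 hq1).mul_left q
  simpa using multipliable_one_add_of_summable (hsum.of_nonneg_of_le (fun n ↦ norm_nonneg _) hdist)

section PartialSums

variable {Ω : Type*} {mΩ : MeasurableSpace Ω} {μ : Measure Ω} {q : ℝ} {Y : ℕ → Ω → ℕ}

theorem integral_cexp_mul_sum_range_eq_prod (hq0 : 0 ≤ q) (hq1 : q ≤ 1)
    (hmeas : ∀ n, Measurable (Y n)) (hindep : iIndepFun Y μ)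
    (hlaw : ∀ n k : ℕ, μ {ω | Y n ω = k} = ENNReal.ofReal ((1 - q ^ (n + 1)) * q ^ ((n + 1) * k)))
    {z : ℂ} (hz : q * Real.exp z.re < 1) (N : ℕ) :
    ∫ ω, Complex.exp (z * ↑(∑ n ∈ range N, ((n + 1 : ℝ) * (Y n ω : ℝ)))) ∂μ
      = ∏ n ∈ range N, (1 - (q : ℂ) ^ (n + 1))
          / (1 - (q : ℂ) ^ (n + 1) * Complex.exp (((n + 1 : ℕ) : ℂ) * z)) := by
  set w : ℕ → ℂ := fun n ↦ ((n + 1 : ℕ) : ℂ) * z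
  have hfactor (n : ℕ) : ∫ ω, Complex.exp (w n * Y n ω) ∂μ
      = (1 - (q : ℂ) ^ (n + 1)) / (1 - (q : ℂ) ^ (n + 1) * Complex.exp (w n)) := by
    rw [integral_cexp_mul_of_geometric (hmeas n) (pow_nonneg hq0 _) (pow_le_one₀ hq0 hq1)
      (fun k ↦ by rw [← pow_mul]; exact hlaw n k)
      (by rw [pow_mul_exp_re_natCast_mul]; exact pow_lt_one₀ (by positivity) hz n.succ_ne_zero)]
    push_cast
    rfl
  have hindep' : iIndepFun (fun (i : Fin N) ω ↦ Complex.exp (w i * Y i ω)) μ :=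
    (hindep.precomp Fin.val_injective).comp (fun i k ↦ Complex.exp (w i * k))
      fun _ ↦ measurable_of_countable _
  calc ∫ ω, Complex.exp (z * ↑(∑ n ∈ range N, ((n + 1 : ℝ) * (Y n ω : ℝ)))) ∂μ
      = ∫ ω, ∏ i : Fin N, Complex.exp (w i * Y i ω) ∂μ := by
        congr 1 with ω
        rw [cexp_mul_sum_range, ← Fin.prod_univ_eq_prod_range (fun n ↦ Complex.exp (w n * Y n ω))]
    _ = ∏ i : Fin N, ∫ ω, Complex.exp (w i * Y i ω) ∂μ :=
        hindep'.integral_fun_prod_eq_prod_integral fun i ↦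
          ((measurable_of_countable fun k : ℕ ↦ Complex.exp (w i * k)).comp
            (hmeas i)).aestronglyMeasurable
    _ = _ := by
        rw [Fin.prod_univ_eq_prod_range (fun n ↦ ∫ ω, Complex.exp (w n * Y n ω) ∂μ)]
        exact prod_congr rfl fun n _ ↦ hfactor n

theorem lintegral_enorm_cexp_mul_sum_range_le (hq0 : 0 ≤ q)
    (hmeas : ∀ n, Measurable (Y n)) (hindep : iIndepFun Y μ)
    (hlaw : ∀ n k : ℕ, μ {ω | Y n ω = k} = ENNReal.ofReal ((1 - q ^ (n + 1)) * q ^ ((n + 1) * k)))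
    {z : ℂ} (hz : q * Real.exp z.re < 1) (N : ℕ) :
    ∫⁻ ω, ‖Complex.exp (z * ↑(∑ n ∈ range N, ((n + 1 : ℝ) * (Y n ω : ℝ))))‖ₑ ∂μ
      ≤ ENNReal.ofReal (Real.exp ((1 - q * Real.exp z.re)⁻¹ ^ 2)) := by
  set a := q * Real.exp z.re
  have ha0 : 0 ≤ a := by positivity
  have hpow (n : ℕ) : a ^ (n + 1) < 1 := pow_lt_one₀ ha0 hz n.succ_ne_zero
  set w : ℕ → ℂ := fun n ↦ ((n + 1 : ℕ) : ℂ) * z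
  calc ∫⁻ ω, ‖Complex.exp (z * ↑(∑ n ∈ range N, ((n + 1 : ℝ) * (Y n ω : ℝ))))‖ₑ ∂μ
      = ∫⁻ ω, ∏ n ∈ range N, ‖Complex.exp (w n * Y n ω)‖ₑ ∂μ := by
        simp only [cexp_mul_sum_range, enorm, nnnorm_prod, ENNReal.ofNNReal_finsetProd, w]
    _ = ∏ n ∈ range N, ∫⁻ ω, ‖Complex.exp (w n * Y n ω)‖ₑ ∂μ :=
        lintegral_prod_eq_prod_lintegral_of_indepFun _ _
          (hindep.comp (fun n k ↦ ‖Complex.exp (w n * k)‖ₑ) fun _ ↦ measurable_of_countable _)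
          fun n ↦ (measurable_of_countable fun k : ℕ ↦ ‖Complex.exp (w n * k)‖ₑ).comp (hmeas n)
    _ = ∏ n ∈ range N, ENNReal.ofReal ((1 - q ^ (n + 1)) / (1 - a ^ (n + 1))) := by
        refine prod_congr rfl fun n _ ↦ ?_
        rw [lintegral_enorm_cexp_mul_of_geometric (hmeas n) (pow_nonneg hq0 _)
          (fun k ↦ by rw [← pow_mul]; exact hlaw n k)
          (by rw [pow_mul_exp_re_natCast_mul]; exact hpow n), pow_mul_exp_re_natCast_mul]
    _ ≤ ∏ n ∈ range N, ENNReal.ofReal ((1 - a ^ (n + 1))⁻¹) := by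
        refine prod_le_prod' fun n _ ↦ ENNReal.ofReal_le_ofReal ?_
        rw [div_eq_mul_inv]
        exact mul_le_of_le_one_left (inv_nonneg.2 (sub_pos.2 (hpow n)).le)
          (by linarith [pow_nonneg hq0 (n + 1)])
    _ = ENNReal.ofReal (∏ n ∈ range N, (1 - a ^ (n + 1))⁻¹) :=
        (ENNReal.ofReal_prod_of_nonneg fun n _ ↦ inv_nonneg.2 (sub_pos.2 (hpow n)).le).symm
    _ ≤ ENNReal.ofReal (Real.exp ((1 - a)⁻¹ ^ 2)) :=
        ENNReal.ofReal_le_ofReal (Real.prod_range_inv_one_sub_pow_succ_le ha0 hz N)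

theorem ae_summable_of_geometric [IsProbabilityMeasure μ] (hq0 : 0 ≤ q) (hq1 : q < 1)
    (hmeas : ∀ n, Measurable (Y n))
    (hlaw : ∀ n k : ℕ, μ {ω | Y n ω = k} = ENNReal.ofReal ((1 - q ^ (n + 1)) * q ^ ((n + 1) * k))) :
    ∀ᵐ ω ∂μ, Summable fun n : ℕ ↦ (n + 1 : ℝ) * (Y n ω : ℝ) := by
  refine ae_summable_of_tsum_measure_setOf_ne_zero_ne_top ?_
  have hne (n : ℕ) : μ {ω | (n + 1 : ℝ) * (Y n ω : ℝ) ≠ 0} = ENNReal.ofReal (q ^ (n + 1)) := by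
    rw [← measure_setOf_ne_zero_of_geometric (hmeas n) (pow_le_one₀ hq0 hq1.le)
      (fun k ↦ by rw [← pow_mul]; exact hlaw n k)]
    congr with ω
    simp [Nat.cast_add_one_ne_zero]
  rw [tsum_congr hne, ← ENNReal.ofReal_tsum_of_nonneg (fun n ↦ by positivity)
    ((summable_nat_add_iff 1).2 (summable_geometric_of_lt_one hq0 hq1))]
  exact ENNReal.ofReal_ne_top

theorem integrable_cexp_mul_tsum (hq0 : 0 ≤ q) (hmeas : ∀ n, Measurable (Y n))
    (hindep : iIndepFun Y μ)
    (hlaw : ∀ n k : ℕ, μ {ω | Y n ω = k} = ENNReal.ofReal ((1 - q ^ (n + 1)) * q ^ ((n + 1) * k)))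
    (hsum : ∀ᵐ ω ∂μ, Summable fun n : ℕ ↦ (n + 1 : ℝ) * (Y n ω : ℝ))
    {t : ℝ} (hqt : q * Real.exp t < 1) :
    Integrable (fun ω ↦ Complex.exp (t * ∑' n : ℕ, (n + 1 : ℝ) * (Y n ω : ℝ))) μ := by
  have hcont : Continuous fun x : ℝ ↦ Complex.exp (t * x) := by fun_prop
  refine integrable_of_tendsto_of_lintegral_enorm_le
    (hsum.mono fun ω h ↦ (hcont.tendsto _).comp h.hasSum.tendsto_sum_nat)
    (fun N ↦ (hcont.measurable.comp (by fun_prop)).aestronglyMeasurable) ENNReal.ofReal_ne_top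
    (lintegral_enorm_cexp_mul_sum_range_le hq0 hmeas hindep hlaw (by simpa using hqt))

theorem tendsto_integral_cexp_mul_sum_range (hq0 : 0 ≤ q) (hmeas : ∀ n, Measurable (Y n))
    (hindep : iIndepFun Y μ)
    (hlaw : ∀ n k : ℕ, μ {ω | Y n ω = k} = ENNReal.ofReal ((1 - q ^ (n + 1)) * q ^ ((n + 1) * k)))
    (hsum : ∀ᵐ ω ∂μ, Summable fun n : ℕ ↦ (n + 1 : ℝ) * (Y n ω : ℝ))
    {z : ℂ} {t : ℝ} (ht0 : 0 ≤ t) (hzt : z.re ≤ t) (hqt : q * Real.exp t < 1) :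
    Tendsto (fun N ↦ ∫ ω, Complex.exp (z * ↑(∑ n ∈ range N, ((n + 1 : ℝ) * (Y n ω : ℝ)))) ∂μ)
      atTop (𝓝 (∫ ω, Complex.exp (z * ↑(∑' n : ℕ, (n + 1 : ℝ) * (Y n ω : ℝ))) ∂μ)) := by
  set S : ℕ → Ω → ℝ := fun N ω ↦ ∑ n ∈ range N, (n + 1 : ℝ) * (Y n ω : ℝ)
  have hcont : Continuous fun x : ℝ ↦ Complex.exp (z * x) := by fun_prop
  have hbound (N : ℕ) : ∀ᵐ ω ∂μ, ‖Complex.exp (z * S N ω)‖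
      ≤ ‖Complex.exp (t * ∑' n : ℕ, (n + 1 : ℝ) * (Y n ω : ℝ))‖ := by
    filter_upwards [hsum] with ω h
    have hS0 : 0 ≤ S N ω := sum_nonneg fun n _ ↦ by positivity
    have hSle : S N ω ≤ ∑' n : ℕ, (n + 1 : ℝ) * (Y n ω : ℝ) :=
      h.sum_le_tsum _ fun n _ ↦ by positivity
    rw [Complex.norm_exp, Complex.norm_exp, Complex.re_mul_ofReal, Complex.re_mul_ofReal,
      Complex.ofReal_re, Real.exp_le_exp]
    calc z.re * S N ω ≤ t * S N ω := mul_le_mul_of_nonneg_right hzt hS0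
      _ ≤ _ := mul_le_mul_of_nonneg_left hSle ht0
  exact tendsto_integral_of_dominated_convergence _
    (fun N ↦ (hcont.measurable.comp (by fun_prop)).aestronglyMeasurable)
    (integrable_cexp_mul_tsum hq0 hmeas hindep hlaw hsum hqt).norm hbound
    (hsum.mono fun ω h ↦ (hcont.tendsto _).comp h.hasSum.tendsto_sum_nat)

end PartialSums

theorem stmt8 {Ω : Type*} [MeasureSpace Ω] [IsProbabilityMeasure (ℙ : Measure Ω)]
    (q : ℝ) (hq : q ∈ Set.Ioo (0:ℝ) 1)
    (Y : ℕ → Ω → ℕ) (hmeas : ∀ n, Measurable (Y n))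
    (hindep : iIndepFun Y ℙ)
    (hlaw : ∀ n k : ℕ, ℙ {ω | Y n ω = k}
      = ENNReal.ofReal ((1 - q ^ (n+1)) * q ^ ((n+1) * k))) :
    (∀ᵐ ω ∂ℙ, Summable (fun n : ℕ => ((n+1 : ℝ) * (Y n ω : ℝ)))) ∧
    ∀ z : ℂ, z.re < -Real.log q →
      (∫ ω, Complex.exp (z * ((∑' n : ℕ, ((n+1 : ℝ) * (Y n ω : ℝ))) : ℝ)) ∂ℙ)
        = ∏' n : ℕ, ((1 - (q:ℂ) ^ (n+1)) / (1 - (q:ℂ) ^ (n+1) * Complex.exp ((n+1 : ℕ) * z))) := by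
  obtain ⟨hq0, hq1⟩ := hq
  have hsum := ae_summable_of_geometric hq0.le hq1 hmeas hlaw
  refine ⟨hsum, fun z hz ↦ ?_⟩
  set t := max z.re 0
  have hqt : q * Real.exp t < 1 := by
    have ht : Real.exp t < q⁻¹ := by
      rw [← Real.exp_log hq0, ← Real.exp_neg]
      exact Real.exp_lt_exp.2 (max_lt hz (neg_pos.2 (Real.log_neg hq0 hq1)))
    calc q * Real.exp t < q * q⁻¹ := by gcongr
      _ = 1 := mul_inv_cancel₀ hq0.ne'
  have hqz : q * Real.exp z.re < 1 := lt_of_le_of_lt (by gcongr; exact le_max_left _ _) hqt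
  refine tendsto_nhds_unique
    (tendsto_integral_cexp_mul_sum_range hq0.le hmeas hindep hlaw hsum (le_max_right _ _)
      (le_max_left _ _) hqt) ?_
  exact (multipliable_one_sub_pow_div_one_sub_pow_mul_cexp hq0.le hq1 hqz).hasProd
    |>.tendsto_prod_nat.congr fun N ↦
      (integral_cexp_mul_sum_range_eq_prod hq0.le hq1.le hmeas hindep hlaw hqz N).symm
end

section
/- As q → 1⁻, Σ_{n=1}^∞ n³ (q^n + q^{2n}) / (1-q^n)³ ~ 6 ζ(2)/(1-q)⁴. -/
/-!
Since `(x + x²)/(1 - x)³ = ∑ₖ k² xᵏ`, the series is the double series `∑ₙ ∑ₖ n³ k² q^{nk}`.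
Summing over `n` first turns it into `∑ₖ k² E(qᵏ)` with `E(y) = ∑ₙ n³ yⁿ = (y + 4y² + y³)/(1 - y)⁴`.
As `q → 1⁻`, `1 - qᵏ ~ k (1 - q)`, so `(1 - q)⁴ k² E(qᵏ) → 6/k²`. With `t = k (1 - q)` this term is
at most `6 t⁴ qᵏ / (k² (1 - qᵏ)⁴)`, which is `O(1/k²)` uniformly in `q`: when `qᵏ ≤ 1/2` because
`qᵏ ≤ e^{-t}` and `t⁴ e^{-t} ≤ 24`, otherwise because `1 - qᵏ ≥ t qᵏ ≥ t/2`. Dominated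
convergence for series then gives the limit `∑ₖ 6/k² = 6 ζ(2)`.
-/

open Filter Topology

theorem Nat.add_two_choose_two_mul_two (k : ℕ) : (k + 2).choose 2 * 2 = (k + 1) * (k + 2) := by
  rw [← Nat.add_one_mul_choose_eq, Nat.choose_one_right]
  ring

theorem Nat.add_three_choose_three_mul_six (k : ℕ) :
    (k + 3).choose 3 * 6 = (k + 1) * (k + 2) * (k + 3) := by
  calc (k + 3).choose 3 * 6 = (k + 3) * ((k + 2).choose 2 * 2) := by
        rw [← mul_assoc, Nat.add_one_mul_choose_eq]; ring
    _ = (k + 1) * (k + 2) * (k + 3) := by rw [Nat.add_two_choose_two_mul_two]; ring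

section GeometricMoments

variable {𝕜 : Type*} [NormedField 𝕜] {x : 𝕜}

theorem hasSum_succ_sq_mul_pow_succ (hx : ‖x‖ < 1) :
    HasSum (fun k : ℕ => ((k : 𝕜) + 1) ^ 2 * x ^ (k + 1)) ((x + x ^ 2) / (1 - x) ^ 3) := by
  have hx1 : 1 - x ≠ 0 := sub_ne_zero.2 (by rintro rfl; simp at hx)
  have h := ((hasSum_choose_mul_geometric_of_norm_lt_one 2 hx).mul_left 2 |>.sub
    (hasSum_choose_mul_geometric_of_norm_lt_one 1 hx)).mul_left x
  rw [show (x + x ^ 2) / (1 - x) ^ 3 = x * (2 * (1 / (1 - x) ^ (2 + 1)) - 1 / (1 - x) ^ (1 + 1))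
    by field_simp; ring]
  refine h.congr_fun fun k => ?_
  have h2 : ((k + 2).choose 2 : 𝕜) * 2 = (k + 1) * (k + 2) := by
    simpa using congrArg (Nat.cast : ℕ → 𝕜) (Nat.add_two_choose_two_mul_two k)
  rw [Nat.choose_one_right]
  push_cast
  linear_combination (-x ^ (k + 1)) * h2

theorem hasSum_succ_cube_mul_pow_succ (hx : ‖x‖ < 1) :
    HasSum (fun k : ℕ => ((k : 𝕜) + 1) ^ 3 * x ^ (k + 1))
      ((x + 4 * x ^ 2 + x ^ 3) / (1 - x) ^ 4) := by
  have hx1 : 1 - x ≠ 0 := sub_ne_zero.2 (by rintro rfl; simp at hx)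
  have h := (((hasSum_choose_mul_geometric_of_norm_lt_one 3 hx).mul_left 6).sub
    ((hasSum_choose_mul_geometric_of_norm_lt_one 2 hx).mul_left 6) |>.add
    (hasSum_choose_mul_geometric_of_norm_lt_one 1 hx)).mul_left x
  rw [show (x + 4 * x ^ 2 + x ^ 3) / (1 - x) ^ 4 = x * (6 * (1 / (1 - x) ^ (3 + 1)) -
    6 * (1 / (1 - x) ^ (2 + 1)) + 1 / (1 - x) ^ (1 + 1)) by field_simp; ring]
  refine h.congr_fun fun k => ?_
  have h2 : ((k + 2).choose 2 : 𝕜) * 2 = (k + 1) * (k + 2) := by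
    simpa using congrArg (Nat.cast : ℕ → 𝕜) (Nat.add_two_choose_two_mul_two k)
  have h3 : ((k + 3).choose 3 : 𝕜) * 6 = (k + 1) * (k + 2) * (k + 3) := by
    simpa using congrArg (Nat.cast : ℕ → 𝕜) (Nat.add_three_choose_three_mul_six k)
  rw [Nat.choose_one_right]
  push_cast
  linear_combination (-x ^ (k + 1)) * h3 + 3 * x ^ (k + 1) * h2

end GeometricMoments

theorem mul_one_sub_mul_pow_le_one_sub_pow {q : ℝ} (h0 : 0 ≤ q) (h1 : q ≤ 1) (m : ℕ) :
    m * (1 - q) * q ^ m ≤ 1 - q ^ m := by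
  have hgeom : 1 - q ^ m = (∑ i ∈ Finset.range m, q ^ i) * (1 - q) := by
    linear_combination geom_sum_mul q m
  have hsum : m * q ^ m ≤ ∑ i ∈ Finset.range m, q ^ i := by
    simpa using Finset.card_nsmul_le_sum (Finset.range m) (q ^ ·) (q ^ m)
      fun i hi => pow_le_pow_of_le_one h0 h1 (Finset.mem_range.1 hi).le
  rw [hgeom]
  nlinarith

theorem pow_le_exp_neg_mul_one_sub {q : ℝ} (h0 : 0 ≤ q) (m : ℕ) :
    q ^ m ≤ Real.exp (-(m * (1 - q))) := by
  calc q ^ m ≤ Real.exp (q - 1) ^ m := by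
        gcongr
        linarith [Real.add_one_le_exp (q - 1)]
    _ = Real.exp (-(m * (1 - q))) := by rw [← Real.exp_nat_mul]; ring_nf

theorem pow_four_mul_exp_neg_le {t : ℝ} (ht : 0 ≤ t) : t ^ 4 * Real.exp (-t) ≤ 24 := by
  have h := Real.pow_div_factorial_le_exp t ht 4
  rw [Real.exp_neg, ← div_eq_mul_inv, div_le_iff₀ (Real.exp_pos t)]
  norm_num [Nat.factorial] at h
  linarith

theorem mul_one_sub_pow_four_mul_pow_le {q : ℝ} (h0 : 0 ≤ q) (h1 : q ≤ 1) (m : ℕ) :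
    (m * (1 - q)) ^ 4 * q ^ m ≤ 384 * (1 - q ^ m) ^ 4 := by
  set t : ℝ := m * (1 - q)
  have ht0 : 0 ≤ t := mul_nonneg m.cast_nonneg (by linarith)
  have hy0 : 0 ≤ q ^ m := pow_nonneg h0 m
  have hy1 : q ^ m ≤ 1 := pow_le_one₀ h0 h1
  rcases le_or_gt (q ^ m) (1 / 2) with hy | hy
  · have hexp : t ^ 4 * q ^ m ≤ 24 :=
      (mul_le_mul_of_nonneg_left (pow_le_exp_neg_mul_one_sub h0 m) (by positivity)).trans
        (pow_four_mul_exp_neg_le ht0)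
    have : (1 / 2 : ℝ) ^ 4 ≤ (1 - q ^ m) ^ 4 := by gcongr; linarith
    linarith
  · have hlin : t / 2 ≤ 1 - q ^ m := by
      nlinarith [mul_one_sub_mul_pow_le_one_sub_pow h0 h1 m]
    have : (t / 2) ^ 4 ≤ (1 - q ^ m) ^ 4 := by gcongr
    nlinarith [pow_nonneg ht0 4]

/-- The `k`-th term, scaled by `(1 - q)⁴`, of the series once its double-series expansion
`∑ₙ ∑ₖ n³ k² q^{nk}` is summed over `n` first. -/
noncomputable def swappedTerm (q : ℝ) (k : ℕ) : ℝ :=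
  ((k : ℝ) + 1) ^ 2 * ((q ^ (k + 1) + 4 * (q ^ (k + 1)) ^ 2 + (q ^ (k + 1)) ^ 3) /
    (1 - q ^ (k + 1)) ^ 4) * (1 - q) ^ 4

theorem swappedTerm_nonneg {q : ℝ} (h0 : 0 ≤ q) (k : ℕ) : 0 ≤ swappedTerm q k := by
  unfold swappedTerm
  positivity

theorem swappedTerm_le {q : ℝ} (h0 : 0 ≤ q) (h1 : q < 1) (k : ℕ) :
    swappedTerm q k ≤ 2304 / ((k : ℝ) + 1) ^ 2 := by
  set y := q ^ (k + 1) with hy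
  have hy0 : 0 ≤ y := pow_nonneg h0 _
  have hy1 : 0 < 1 - y := sub_pos.2 (pow_lt_one₀ h0 h1 k.succ_ne_zero)
  have hnum : y + 4 * y ^ 2 + y ^ 3 ≤ 6 * y := by nlinarith [pow_le_one₀ h0 h1.le (n := k + 1)]
  have hkey := mul_one_sub_pow_four_mul_pow_le h0 h1.le (k + 1)
  push_cast at hkey
  have hnum_le :
      (((k : ℝ) + 1) * (1 - q)) ^ 4 * (y + 4 * y ^ 2 + y ^ 3) ≤ 2304 * (1 - y) ^ 4 := by
    nlinarith [mul_le_mul_of_nonneg_left hnum (by positivity : 0 ≤ (((k : ℝ) + 1) * (1 - q)) ^ 4)]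
  calc swappedTerm q k
      = (((k : ℝ) + 1) * (1 - q)) ^ 4 * (y + 4 * y ^ 2 + y ^ 3) / (1 - y) ^ 4
          / ((k : ℝ) + 1) ^ 2 := by
        simp only [swappedTerm, ← hy]
        field_simp
    _ ≤ 2304 / ((k : ℝ) + 1) ^ 2 := by
        gcongr
        rwa [div_le_iff₀ (by positivity)]

theorem tendsto_swappedTerm (k : ℕ) :
    Tendsto (swappedTerm · k) (𝓝[≠] 1) (𝓝 (6 / ((k : ℝ) + 1) ^ 2)) := by
  set S : ℝ → ℝ := fun q => ∑ i ∈ Finset.range (k + 1), q ^ i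
  have hS1 : S 1 = k + 1 := by simp [S]
  set H : ℝ → ℝ := fun q => ((k : ℝ) + 1) ^ 2 *
      ((q ^ (k + 1) + 4 * (q ^ (k + 1)) ^ 2 + (q ^ (k + 1)) ^ 3) / S q ^ 4)
  have hcont : ContinuousAt H 1 := by
    refine continuousAt_const.mul (ContinuousAt.div (by fun_prop) (by fun_prop) ?_)
    rw [hS1]; positivity
  have hH1 : H 1 = 6 / ((k : ℝ) + 1) ^ 2 := by
    simp only [H, hS1]
    field_simp
    norm_num
  rw [← hH1]
  refine (hcont.tendsto.mono_left nhdsWithin_le_nhds).congr' ?_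
  filter_upwards [self_mem_nhdsWithin] with q hq
  have hq1 : 1 - q ≠ 0 := sub_ne_zero.2 (Ne.symm hq)
  have hgeom : 1 - q ^ (k + 1) = (1 - q) * S q := by
    linear_combination geom_sum_mul q (k + 1)
  simp only [H, swappedTerm, hgeom]
  field_simp

theorem hasSum_six_div_succ_sq : HasSum (fun k : ℕ => 6 / ((k : ℝ) + 1) ^ 2) (Real.pi ^ 2) := by
  have h := ((hasSum_nat_add_iff' 1).2 hasSum_zeta_two).mul_left 6
  rw [show 6 * (Real.pi ^ 2 / 6 - ∑ i ∈ Finset.range 1, 1 / (i : ℝ) ^ 2) = Real.pi ^ 2 by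
    norm_num [Finset.sum_range_one, mul_div_cancel₀]] at h
  exact h.congr_fun fun k => by push_cast; ring

theorem summable_swappedTerm {q : ℝ} (h0 : 0 ≤ q) (h1 : q < 1) :
    Summable (swappedTerm q) :=
  (hasSum_six_div_succ_sq.summable.mul_left 384).of_nonneg_of_le (swappedTerm_nonneg h0)
    fun k => (swappedTerm_le h0 h1 k).trans_eq (by ring)

theorem tsum_mul_one_sub_pow_four_eq_tsum_swappedTerm {q : ℝ} (h0 : 0 ≤ q) (h1 : q < 1) :
    (∑' n : ℕ, ((n + 1 : ℝ) ^ 3 * (q ^ (n + 1) + q ^ (2 * (n + 1))) / (1 - q ^ (n + 1)) ^ 3))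
      * (1 - q) ^ 4 = ∑' k, swappedTerm q k := by
  have hq : ‖q‖ < 1 := by rwa [Real.norm_of_nonneg h0]
  have hq4 : (1 - q) ^ 4 ≠ 0 := pow_ne_zero _ (by linarith)
  set f : ℕ → ℕ → ℝ := fun k n =>
    ((k : ℝ) + 1) ^ 2 * (((n : ℝ) + 1) ^ 3 * (q ^ (k + 1)) ^ (n + 1))
  have hnorm (k : ℕ) : ‖q ^ (k + 1)‖ < 1 := by
    rw [norm_pow]; exact pow_lt_one₀ (norm_nonneg q) hq k.succ_ne_zero
  have hrow (k : ℕ) : HasSum (f k) (swappedTerm q k / (1 - q) ^ 4) := by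
    rw [swappedTerm, mul_div_cancel_right₀ _ hq4]
    exact (hasSum_succ_cube_mul_pow_succ (hnorm k)).mul_left _
  have hcol (n : ℕ) : HasSum (f · n)
      ((n + 1 : ℝ) ^ 3 * (q ^ (n + 1) + q ^ (2 * (n + 1))) / (1 - q ^ (n + 1)) ^ 3) := by
    rw [mul_comm 2, pow_mul, mul_div_assoc]
    refine ((hasSum_succ_sq_mul_pow_succ (hnorm n)).mul_left _).congr_fun fun k => ?_
    simp only [f, ← pow_mul, mul_comm (k + 1)]
    ring
  have hsum : Summable (Function.uncurry f) := by
    refine (summable_prod_of_nonneg fun p => by simp only [Function.uncurry, f]; positivity).2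
      ⟨fun k => (hrow k).summable, ?_⟩
    simpa only [Function.uncurry_apply_pair, (hrow _).tsum_eq] using
      (summable_swappedTerm h0 h1).div_const _
  rw [tsum_congr fun n => (hcol n).tsum_eq.symm, hsum.tsum_comm,
    tsum_congr fun k => (hrow k).tsum_eq, tsum_div_const, div_mul_cancel₀ _ hq4]

theorem stmt11 :
    Tendsto (fun q : ℝ =>
        (∑' n : ℕ, ((n+1 : ℝ)^3 * (q^(n+1) + q^(2*(n+1))) / (1 - q^(n+1))^3))
          * (1-q)^4 / (6 * (Real.pi^2/6)))
      (𝓝[Set.Ioo (0:ℝ) 1] 1) (𝓝 1) := by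
  have hlim : Tendsto (fun q => ∑' k, swappedTerm q k) (𝓝[Set.Ioo 0 1] 1) (𝓝 (Real.pi ^ 2)) := by
    rw [← hasSum_six_div_succ_sq.tsum_eq]
    refine tendsto_tsum_of_dominated_convergence (hasSum_six_div_succ_sq.summable.mul_left 384)
      (fun k => (tendsto_swappedTerm k).mono_left (nhdsWithin_mono _ fun q hq => hq.2.ne)) ?_
    filter_upwards [self_mem_nhdsWithin] with q hq k
    rw [Real.norm_of_nonneg (swappedTerm_nonneg hq.1.le k)]
    exact (swappedTerm_le hq.1.le hq.2 k).trans_eq (by ring)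
  have h := hlim.div_const (6 * (Real.pi ^ 2 / 6))
  rw [show Real.pi ^ 2 / (6 * (Real.pi ^ 2 / 6)) = 1 by field_simp] at h
  refine h.congr' ?_
  filter_upwards [self_mem_nhdsWithin] with q hq
  rw [tsum_mul_one_sub_pow_four_eq_tsum_swappedTerm hq.1.le hq.2]
end

section
/- Fix d ≥ 1 and ξ₁, ξ₂ ∈ ℝ with ‖ξ‖² = ξ₁² + ξ₂². For every prime p with ‖ξ‖ ≤ √p, the remainder R_p(ξ) = Σ_{m≥2} ((iξ₁+ξ₂)/2)^{↑m} ((iξ₁-ξ₂)/2)^{↑m} / (m!)² · p^{-m} of the hypergeometric function ₂F₁((iξ₁+ξ₂)/2, (iξ₁-ξ₂)/2; 1)(1/p) satisfies |R_p(ξ)| ≤ ( (‖ξ‖/2)(‖ξ‖/2+1) / (2 (1-p^{-1/2})^{‖ξ‖/2+2} p) )². -/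
/-!
Put `s = ‖ξ‖/2` and `x = p^(-1/2)`, so that `x² = 1/p`. Since `|a^{↑k}| ≤ |a|^{↑k}`, the `k`-th
term of the remainder is bounded by `c_k²`, where `c_k = s^{↑k} x^k / k!` is the `k`-th term of the
binomial series of `(1 - x)^(-s)`. Hence `|R_p| ≤ ∑_{k≥2} c_k² ≤ (∑_{k≥2} c_k)²`, and because
`s^{↑(n+2)} = s(s+1)(s+2)^{↑n}` and `(n+2)! ≥ 2 n!`, the tail `∑_{k≥2} c_k` is dominated by
`s(s+1)/2 · x²` times the binomial series of `(1 - x)^(-(s+2))`.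
-/

open Polynomial Nat

theorem ascPochhammer_eval_nonneg {S : Type*} [Semiring S] [PartialOrder S] [IsOrderedRing S]
    (n : ℕ) {s : S} (hs : 0 ≤ s) : 0 ≤ (ascPochhammer S n).eval s := by
  induction n with
  | zero => simp
  | succ n ih =>
    rw [ascPochhammer_succ_eval]
    exact mul_nonneg ih (add_nonneg hs n.cast_nonneg)

theorem norm_ascPochhammer_eval_le {R : Type*} [NormedRing R] [NormOneClass R] (n : ℕ) (a : R) :
    ‖(ascPochhammer R n).eval a‖ ≤ (ascPochhammer ℝ n).eval ‖a‖ := by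
  induction n with
  | zero => simp
  | succ n ih =>
    rw [ascPochhammer_succ_eval, ascPochhammer_succ_eval]
    refine (norm_mul_le _ _).trans (mul_le_mul ih ?_ (norm_nonneg _) ((norm_nonneg _).trans ih))
    exact (norm_add_le _ _).trans (by simpa using Nat.norm_cast_le (α := R) n)

theorem ascPochhammer_eval_add_two {S : Type*} [CommSemiring S] (n : ℕ) (s : S) :
    (ascPochhammer S (n + 2)).eval s = s * (s + 1) * (ascPochhammer S n).eval (s + 2) := by
  rw [add_comm, ← ascPochhammer_mul, eval_mul, eval_comp]
  simp [ascPochhammer_succ_eval]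

theorem ascPochhammer_eval_add_two_div_factorial_le {s : ℝ} (hs : 0 ≤ s) (n : ℕ) :
    (ascPochhammer ℝ (n + 2)).eval s / (n + 2)! ≤
      s * (s + 1) / 2 * ((ascPochhammer ℝ n).eval (s + 2) / n !) := by
  have hfac : (2 * n ! : ℝ) ≤ (n + 2)! := by
    have : 2 * n ! ≤ (n + 2)! := by
      rw [Nat.factorial_succ, Nat.factorial_succ]
      exact Nat.mul_le_mul (by omega) (Nat.le_mul_of_pos_left _ (by omega))
    exact_mod_cast this
  have hA := ascPochhammer_eval_nonneg n (by linarith : 0 ≤ s + 2)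
  calc (ascPochhammer ℝ (n + 2)).eval s / (n + 2)!
      ≤ s * (s + 1) * (ascPochhammer ℝ n).eval (s + 2) / (2 * n !) := by
        rw [ascPochhammer_eval_add_two]
        exact div_le_div_of_nonneg_left (by positivity) (by positivity) hfac
    _ = s * (s + 1) / 2 * ((ascPochhammer ℝ n).eval (s + 2) / n !) := by ring

theorem Real.hasSum_ascPochhammer_div_factorial_mul_pow (a : ℝ) {x : ℝ} (hx : |x| < 1) :
    HasSum (fun n ↦ (ascPochhammer ℝ n).eval a / n ! * x ^ n) ((1 - x) ^ a)⁻¹ := by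
  have hx' : x ∈ Metric.eball (0 : ℝ) 1 := by
    simpa [Metric.mem_eball, edist_zero_right, enorm_eq_nnnorm, ← NNReal.coe_lt_one] using hx
  have h := (one_div_one_sub_rpow_hasFPowerSeriesOnBall_zero a).hasSum hx'
  simp only [FormalMultilinearSeries.ofScalars_apply_eq, zero_add, one_div, smul_eq_mul] at h
  refine h.congr_fun fun n ↦ ?_
  rw [← Ring.multichoose_eq]
  congr 1
  rw [div_eq_iff (by positivity), mul_comm, ← nsmul_eq_mul,
    Ring.factorial_nsmul_multichoose_eq_ascPochhammer, ascPochhammer_smeval_eq_eval]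

theorem ascPochhammer_tail_le_majorant {s : ℝ} (hs : 0 ≤ s) {x : ℝ} (hx : 0 ≤ x) (n : ℕ) :
    (ascPochhammer ℝ (n + 2)).eval s / (n + 2)! * x ^ (n + 2) ≤
      s * (s + 1) / 2 * x ^ 2 * ((ascPochhammer ℝ n).eval (s + 2) / n ! * x ^ n) := by
  calc (ascPochhammer ℝ (n + 2)).eval s / (n + 2)! * x ^ (n + 2)
      ≤ s * (s + 1) / 2 * ((ascPochhammer ℝ n).eval (s + 2) / n !) * x ^ (n + 2) := by
        gcongr
        exact ascPochhammer_eval_add_two_div_factorial_le hs n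
    _ = s * (s + 1) / 2 * x ^ 2 * ((ascPochhammer ℝ n).eval (s + 2) / n ! * x ^ n) := by ring

theorem summable_ascPochhammer_tail {s : ℝ} (hs : 0 ≤ s) {x : ℝ} (hx0 : 0 ≤ x) (hx1 : x < 1) :
    Summable fun n : ℕ ↦ (ascPochhammer ℝ (n + 2)).eval s / (n + 2)! * x ^ (n + 2) :=
  .of_nonneg_of_le (fun n ↦ by have := ascPochhammer_eval_nonneg (n + 2) hs; positivity)
    (ascPochhammer_tail_le_majorant hs hx0)
    ((Real.hasSum_ascPochhammer_div_factorial_mul_pow (s + 2)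
      (abs_lt.2 ⟨by linarith, hx1⟩)).summable.mul_left _)

theorem tsum_ascPochhammer_tail_le {s : ℝ} (hs : 0 ≤ s) {x : ℝ} (hx0 : 0 ≤ x) (hx1 : x < 1) :
    ∑' n : ℕ, (ascPochhammer ℝ (n + 2)).eval s / (n + 2)! * x ^ (n + 2) ≤
      s * (s + 1) / 2 * x ^ 2 * ((1 - x) ^ (s + 2))⁻¹ := by
  have h := (Real.hasSum_ascPochhammer_div_factorial_mul_pow (s + 2)
    (abs_lt.2 ⟨by linarith, hx1⟩)).mul_left (s * (s + 1) / 2 * x ^ 2)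
  exact (summable_ascPochhammer_tail hs hx0 hx1).tsum_le_tsum
    (ascPochhammer_tail_le_majorant hs hx0) h.summable |>.trans_eq h.tsum_eq

theorem sq_le_mul_tsum_of_nonneg {ι : Type*} {f : ι → ℝ} (hf : ∀ i, 0 ≤ f i)
    (hsum : Summable f) (i : ι) : f i ^ 2 ≤ f i * ∑' j, f j := by
  rw [sq]
  exact mul_le_mul_of_nonneg_left (hsum.le_tsum i fun j _ ↦ hf j) (hf i)

theorem Summable.sq_of_nonneg {ι : Type*} {f : ι → ℝ} (hf : ∀ i, 0 ≤ f i) (hsum : Summable f) :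
    Summable fun i ↦ f i ^ 2 :=
  .of_nonneg_of_le (fun _ ↦ sq_nonneg _) (sq_le_mul_tsum_of_nonneg hf hsum) (hsum.mul_right _)

theorem tsum_sq_le_sq_tsum_of_nonneg {ι : Type*} {f : ι → ℝ} (hf : ∀ i, 0 ≤ f i)
    (hsum : Summable f) : ∑' i, f i ^ 2 ≤ (∑' i, f i) ^ 2 := by
  rw [sq (∑' i, f i), ← tsum_mul_right]
  exact (hsum.sq_of_nonneg hf).tsum_le_tsum (sq_le_mul_tsum_of_nonneg hf hsum) (hsum.mul_right _)

theorem Complex.norm_I_mul_add (a b : ℝ) : ‖I * a + b‖ = √(a ^ 2 + b ^ 2) := by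
  rw [show I * a + b = b + a * I by ring, norm_add_mul_I, add_comm]

theorem norm_ascPochhammer_mul_div_sq_factorial_mul_pow_le {𝕜 : Type*} [RCLike 𝕜]
    (k : ℕ) (a b z : 𝕜) :
    ‖(ascPochhammer 𝕜 k).eval a * (ascPochhammer 𝕜 k).eval b / (k ! : 𝕜) ^ 2 * z ^ k‖ ≤
      (ascPochhammer ℝ k).eval ‖a‖ * (ascPochhammer ℝ k).eval ‖b‖ / (k ! : ℝ) ^ 2 * ‖z‖ ^ k := by
  rw [norm_mul, norm_div, norm_mul, norm_pow, norm_pow, RCLike.norm_natCast]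
  gcongr
  · exact ascPochhammer_eval_nonneg k (norm_nonneg a)
  · exact norm_ascPochhammer_eval_le k a
  · exact norm_ascPochhammer_eval_le k b

theorem stmt14_general (ξ₁ ξ₂ : ℝ) (p : ℕ) (hp : p.Prime) :
    ‖∑' m : ℕ, (ascPochhammer ℂ (m+2)).eval ((Complex.I * ξ₁ + ξ₂) / 2)
        * (ascPochhammer ℂ (m+2)).eval ((Complex.I * ξ₁ - ξ₂) / 2)
        / (((m+2).factorial : ℂ))^2 * (p : ℂ)^(-(m+2 : ℤ))‖
      ≤ ((Real.sqrt (ξ₁^2 + ξ₂^2) / 2) * (Real.sqrt (ξ₁^2 + ξ₂^2) / 2 + 1)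
          / (2 * (1 - (p:ℝ) ^ (-(1:ℝ)/2)) ^ (Real.sqrt (ξ₁^2 + ξ₂^2) / 2 + 2) * p))^2 := by
  set s := √(ξ₁ ^ 2 + ξ₂ ^ 2) / 2
  set x := (p : ℝ) ^ (-(1 : ℝ) / 2)
  have hs : 0 ≤ s := by positivity
  have hp0 : (0 : ℝ) < p := by exact_mod_cast hp.pos
  have hx0 : 0 ≤ x := by positivity
  have hx1 : x < 1 := Real.rpow_lt_one_of_one_lt_of_neg (by exact_mod_cast hp.one_lt) (by norm_num)
  have hx2 : x ^ 2 = (p : ℝ)⁻¹ := by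
    rw [← Real.rpow_natCast, ← Real.rpow_mul hp0.le]
    norm_num [Real.rpow_neg_one]
  have ha : ‖(Complex.I * ξ₁ + ξ₂) / 2‖ = s := by
    rw [norm_div, Complex.norm_I_mul_add, Complex.norm_two]
  have hb : ‖(Complex.I * ξ₁ - ξ₂) / 2‖ = s := by
    rw [sub_eq_add_neg, ← Complex.ofReal_neg, norm_div, Complex.norm_I_mul_add, neg_sq,
      Complex.norm_two]
  set c := fun n : ℕ ↦ (ascPochhammer ℝ (n + 2)).eval s / (n + 2)! * x ^ (n + 2)
  have hc0 : ∀ n, 0 ≤ c n := fun n ↦ by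
    have := ascPochhammer_eval_nonneg (n + 2) hs; positivity
  have hc : Summable c := summable_ascPochhammer_tail hs hx0 hx1
  have hterm : ∀ n : ℕ, ‖(ascPochhammer ℂ (n+2)).eval ((Complex.I * ξ₁ + ξ₂) / 2)
      * (ascPochhammer ℂ (n+2)).eval ((Complex.I * ξ₁ - ξ₂) / 2)
      / (((n+2).factorial : ℂ))^2 * (p : ℂ)^(-(n+2 : ℤ))‖ ≤ c n ^ 2 := fun n ↦ by
    have hz : (p : ℂ) ^ (-(n + 2 : ℤ)) = (p : ℂ)⁻¹ ^ (n + 2) := by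
      rw [zpow_neg, inv_pow, ← zpow_natCast]; push_cast; rfl
    rw [hz]
    refine (norm_ascPochhammer_mul_div_sq_factorial_mul_pow_le _ _ _ _).trans_eq ?_
    rw [ha, hb, norm_inv, Complex.norm_natCast, ← hx2]
    ring
  calc _ ≤ ∑' n, c n ^ 2 := tsum_of_norm_bounded (hc.sq_of_nonneg hc0).hasSum hterm
    _ ≤ (∑' n, c n) ^ 2 := tsum_sq_le_sq_tsum_of_nonneg hc0 hc
    _ ≤ (s * (s + 1) / 2 * x ^ 2 * ((1 - x) ^ (s + 2))⁻¹) ^ 2 := by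
      gcongr
      · exact tsum_nonneg hc0
      · exact tsum_ascPochhammer_tail_le hs hx0 hx1
    _ = _ := by
      rw [hx2]
      field_simp

theorem stmt14 (ξ₁ ξ₂ : ℝ) (p : ℕ) (hp : p.Prime)
    (hξ : Real.sqrt (ξ₁^2 + ξ₂^2) ≤ Real.sqrt p) :
    ‖∑' m : ℕ, (ascPochhammer ℂ (m+2)).eval ((Complex.I * ξ₁ + ξ₂) / 2)
        * (ascPochhammer ℂ (m+2)).eval ((Complex.I * ξ₁ - ξ₂) / 2)
        / (((m+2).factorial : ℂ))^2 * (p : ℂ)^(-(m+2 : ℤ))‖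
      ≤ ((Real.sqrt (ξ₁^2 + ξ₂^2) / 2) * (Real.sqrt (ξ₁^2 + ξ₂^2) / 2 + 1)
          / (2 * (1 - (p:ℝ) ^ (-(1:ℝ)/2)) ^ (Real.sqrt (ξ₁^2 + ξ₂^2) / 2 + 2) * p))^2 :=
  stmt14_general ξ₁ ξ₂ p hp
end
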